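/- Case of a non-isotropic odd simple root: let α be odd with 2α ∈ Δ_0, and work in the reduced enveloping algebra setting over k of characteristic p > 2 with Y_α^{2p} acting as 0. In the baby Verma module Z(λ) with v_i = Y_α^i ⊗ 1 (0 ≤ i ≤ 2p−1), one has X_α · v_i = −i v_{i−1} if i is even, and X_α · v_i = (λ(H_α) − (i−1)) v_{i−1} if i is odd. -/
import Mathlib


/-- Case of a non-isotropic odd simple root `α` (so `2α ∈ Δ₀`).
`X, Y, H` denote the actions of `X_α, Y_α, H_α` on the baby Verma module `Z(λ)`
over `k` (char `p > 2`); the Chevalley relations give `X∘Y + Y∘X = H` (super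
bracket of odd elements) and `[H, Y] = −α(H_α)·Y = −2Y`, i.e. `H∘Y = Y∘H − 2Y`.
The highest weight vector `v₀ = 1⊗1` satisfies `X v₀ = 0`, `H v₀ = λ(H_α) • v₀`,
and `Y^{2p}` acts as `0` (reduced enveloping algebra).  Setting `v_i := Y^i v₀`
for `0 ≤ i ≤ 2p−1`, one has `X · v_i = −i • v_{i−1}` for `i` even and
`X · v_i = (λ(H_α) − (i−1)) • v_{i−1}` for `i` odd. -/
theorem nonisotropic_odd_simple_root_computation
    (k : Type*) [Field k] (p : ℕ) [Fact p.Prime] (hp2 : 2 < p) [CharP k p]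
    (M : Type*) [AddCommGroup M] [Module k M]
    (X Y H : Module.End k M) (lamH : k)
    (hanti : X * Y + Y * X = H)
    (hHY : H * Y = Y * H - (2 : k) • Y)
    (v0 : M) (hXv0 : X v0 = 0) (hHv0 : H v0 = lamH • v0)
    (hY2p : Y ^ (2 * p) = 0) :
    ∀ i : ℕ, 1 ≤ i → i ≤ 2 * p - 1 →
      (Even i → X ((Y ^ i) v0) = (-(i : k)) • (Y ^ (i - 1)) v0) ∧
      (Odd i → X ((Y ^ i) v0) = (lamH - ((i : k) - 1)) • (Y ^ (i - 1)) v0) := by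
  have hXY : X * Y = H - Y * X := eq_sub_of_add_eq hanti
  have hpow : ∀ j : ℕ, (Y ^ (j + 1)) v0 = Y ((Y ^ j) v0) := by
    intro j; rw [pow_succ']; simp [Module.End.mul_apply]
  -- H acts on Y^i v0 by lamH - 2i.
  have hH : ∀ i : ℕ, H ((Y ^ i) v0) = (lamH - 2 * (i : k)) • (Y ^ i) v0 := by
    intro i
    induction i with
    | zero => simpa using hHv0
    | succ j ih =>
        have h1 : H ((Y ^ (j + 1)) v0) = (H * Y) ((Y ^ j) v0) := by
          rw [hpow]; simp [Module.End.mul_apply]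
        rw [h1, hHY]
        simp only [LinearMap.sub_apply, LinearMap.smul_apply, Module.End.mul_apply, ih,
          map_smul, hpow]
        push_cast
        module
  have key : ∀ i : ℕ, 1 ≤ i →
      (Even i → X ((Y ^ i) v0) = (-(i : k)) • (Y ^ (i - 1)) v0) ∧
      (Odd i → X ((Y ^ i) v0) = (lamH - ((i : k) - 1)) • (Y ^ (i - 1)) v0) := by
    intro i
    induction i with
    | zero => omega
    | succ j ih =>
        intro _
        have hstep : X ((Y ^ (j + 1)) v0) = H ((Y ^ j) v0) - Y (X ((Y ^ j) v0)) := by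
          have h1 : X ((Y ^ (j + 1)) v0) = (X * Y) ((Y ^ j) v0) := by
            rw [hpow]; simp [Module.End.mul_apply]
          rw [h1, hXY]
          simp [Module.End.mul_apply]
        rcases Nat.eq_zero_or_pos j with hj | hj
        · subst hj
          refine ⟨fun h => absurd h (by decide), fun _ => ?_⟩
          rw [hstep]
          simp [hXv0, hHv0]
        · obtain ⟨hje, hjo⟩ := ih hj
          obtain ⟨m, rfl⟩ : ∃ m, j = m + 1 := ⟨j - 1, by omega⟩
          constructor
          · intro hev
            have hodd : Odd (m + 1) :=
              Nat.not_even_iff_odd.mp (Nat.even_add_one.mp hev)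
            rw [hstep, hjo hodd, hH, map_smul]
            simp only [Nat.add_sub_cancel]
            rw [hpow]
            push_cast
            module
          · intro hodd
            have hev : Even (m + 1) :=
              not_not.mp (fun h => (Nat.not_even_iff_odd.mpr hodd) (Nat.even_add_one.mpr h))
            rw [hstep, hje hev, hH, map_smul]
            simp only [Nat.add_sub_cancel]
            rw [hpow]
            push_cast
            module
  exact fun i h1 _ => key i h1
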